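/- Suppose a finite nonempty set A of reals satisfies |8A| ≥ |A|^{3/2 - 1/64}, |8A||8f(A)| ≥ |A|^{3 - 1/128}, and |8A - 7A|^{16} · |5f(A) - 4f(A)|^{11} ≥ |A|^{41} (up to an absolute constant and logarithmic factors), where f(A) is the image of A under an injective map f. Then |16A|^{32} · |13f(A)|^{22} ≳ |A|^{81 + 1/3}, and hence max(|16A|, |13f(A)|) ≳ |A|^{3/2 + 1/162}. -/
import Mathlib


open Finset Pointwise

/-- The `k`-fold sumset of a finite set of reals. -/
noncomputable def foldSum : ℕ → Finset ℝ → Finset ℝ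
  | 0, _ => {0}
  | n + 1, A => foldSum n A + A

lemma foldSum_nonempty {A : Finset ℝ} (h : A.Nonempty) (n : ℕ) : (foldSum n A).Nonempty := by
  induction n with
  | zero => exact ⟨0, by simp [foldSum]⟩
  | succ n ih => exact ih.add h

lemma foldSum_add_eq (m n : ℕ) (A : Finset ℝ) :
    foldSum (m + n) A = foldSum m A + foldSum n A := by
  induction n with
  | zero => simp [foldSum, Finset.singleton_zero]
  | succ n ih =>
      show foldSum (m + n) A + A = foldSum m A + (foldSum n A + A)
      rw [ih, add_assoc]

lemma card_foldSum_le {A : Finset ℝ} (h : A.Nonempty) (n : ℕ) :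
    (foldSum n A).card ≤ (foldSum (n + 1) A).card :=
  Finset.card_le_card_add_right h

/-- Pure real-arithmetic combination step. -/
lemma realStep (c₁ p n L s t d e s16 t13 : ℝ) (hc₁ : 0 < c₁) (hp : 0 ≤ p)
    (hn1 : 1 ≤ n) (hL1 : 1 ≤ L) (hs1 : 1 ≤ s) (ht1 : 1 ≤ t)
    (hs161 : 1 ≤ s16) (ht131 : 1 ≤ t13) (hd0 : 0 ≤ d) (he0 : 0 ≤ e)
    (h1 : n ^ ((3 : ℝ) / 2 - 1 / 64) ≤ s)
    (h2 : n ^ ((3 : ℝ) - 1 / 128) ≤ s * t)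
    (h3 : c₁ * n ^ (41 : ℕ) / L ^ p ≤ d ^ (16 : ℕ) * e ^ (11 : ℕ))
    (hds : d * s ≤ s16 ^ 2) (het : e * t ≤ t13 ^ 2) :
    min c₁ (c₁ ^ ((1 : ℝ) / 54)) * n ^ ((81 : ℝ) + 1 / 3) / L ^ p ≤
      s16 ^ (32 : ℕ) * t13 ^ (22 : ℕ) ∧
    min c₁ (c₁ ^ ((1 : ℝ) / 54)) * n ^ ((3 : ℝ) / 2 + 1 / 162) / L ^ p ≤ max s16 t13 := by
  set c₂ := min c₁ (c₁ ^ ((1 : ℝ) / 54)) with hc₂def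
  have hc₂0 : 0 < c₂ := lt_min hc₁ (Real.rpow_pos_of_pos hc₁ _)
  have hn0 : (0 : ℝ) < n := lt_of_lt_of_le one_pos hn1
  have hLp1 : (1 : ℝ) ≤ L ^ p := Real.one_le_rpow hL1 hp
  have hLp0 : (0 : ℝ) < L ^ p := lt_of_lt_of_le one_pos hLp1
  have hpow : n ^ ((163 : ℝ) / 2 - 21 / 128) =
      n ^ (41 : ℕ) * ((n ^ ((3 : ℝ) / 2 - 1 / 64)) ^ (5 : ℕ) *
        (n ^ ((3 : ℝ) - 1 / 128)) ^ (11 : ℕ)) := by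
    rw [← Real.rpow_natCast n 41, ← Real.rpow_natCast (n ^ ((3 : ℝ) / 2 - 1 / 64)) 5,
        ← Real.rpow_natCast (n ^ ((3 : ℝ) - 1 / 128)) 11, ← Real.rpow_mul hn0.le,
        ← Real.rpow_mul hn0.le, ← Real.rpow_add hn0, ← Real.rpow_add hn0]
    norm_num
  have key : c₁ * n ^ ((163 : ℝ) / 2 - 21 / 128) / L ^ p ≤ s16 ^ (32 : ℕ) * t13 ^ (22 : ℕ) := by
    calc c₁ * n ^ ((163 : ℝ) / 2 - 21 / 128) / L ^ p
        = (c₁ * n ^ (41 : ℕ) / L ^ p) *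
            ((n ^ ((3 : ℝ) / 2 - 1 / 64)) ^ (5 : ℕ) * (n ^ ((3 : ℝ) - 1 / 128)) ^ (11 : ℕ)) := by
          rw [hpow]; ring
      _ ≤ (d ^ (16 : ℕ) * e ^ (11 : ℕ)) * (s ^ (5 : ℕ) * (s * t) ^ (11 : ℕ)) := by
          refine mul_le_mul h3 ?_ (by positivity) (by positivity)
          exact mul_le_mul (pow_le_pow_left₀ (by positivity) h1 5)
            (pow_le_pow_left₀ (by positivity) h2 11) (by positivity) (by positivity)
      _ = (d * s) ^ (16 : ℕ) * (e * t) ^ (11 : ℕ) := by ring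
      _ ≤ (s16 ^ 2) ^ (16 : ℕ) * (t13 ^ 2) ^ (11 : ℕ) :=
          mul_le_mul (pow_le_pow_left₀ (by positivity) hds 16)
            (pow_le_pow_left₀ (by positivity) het 11) (by positivity) (by positivity)
      _ = s16 ^ (32 : ℕ) * t13 ^ (22 : ℕ) := by ring
  have hmono : c₂ * n ^ ((81 : ℝ) + 1 / 3) ≤ c₁ * n ^ ((163 : ℝ) / 2 - 21 / 128) :=
    mul_le_mul (min_le_left _ _) (Real.rpow_le_rpow_of_exponent_le hn1 (by norm_num))
      (by positivity) hc₁.le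
  constructor
  · exact le_trans (div_le_div_of_nonneg_right hmono hLp0.le) key
  · have hM1 : (1 : ℝ) ≤ max s16 t13 := le_trans hs161 (le_max_left _ _)
    have hM0 : (0 : ℝ) ≤ max s16 t13 := le_trans zero_le_one hM1
    refine le_of_pow_le_pow_left₀ (n := 54) (by norm_num) hM0 ?_
    have hexp : (n ^ ((3 : ℝ) / 2 + 1 / 162)) ^ (54 : ℕ) = n ^ ((81 : ℝ) + 1 / 3) := by
      rw [← Real.rpow_natCast (n ^ ((3 : ℝ) / 2 + 1 / 162)) 54, ← Real.rpow_mul hn0.le]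
      norm_num
    have hc₂54 : c₂ ^ (54 : ℕ) ≤ c₁ := by
      calc c₂ ^ (54 : ℕ) ≤ (c₁ ^ ((1 : ℝ) / 54)) ^ (54 : ℕ) :=
          pow_le_pow_left₀ hc₂0.le (min_le_right _ _) 54
        _ = c₁ := by
          rw [← Real.rpow_natCast (c₁ ^ ((1 : ℝ) / 54)) 54, ← Real.rpow_mul hc₁.le]
          norm_num
    calc (c₂ * n ^ ((3 : ℝ) / 2 + 1 / 162) / L ^ p) ^ (54 : ℕ)
        = c₂ ^ (54 : ℕ) * n ^ ((81 : ℝ) + 1 / 3) / (L ^ p) ^ (54 : ℕ) := by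
          rw [div_pow, mul_pow, hexp]
      _ ≤ c₁ * n ^ ((163 : ℝ) / 2 - 21 / 128) / L ^ p :=
          div_le_div₀ (mul_nonneg hc₁.le (by positivity))
            (mul_le_mul hc₂54 (Real.rpow_le_rpow_of_exponent_le hn1 (by norm_num))
              (by positivity) hc₁.le) hLp0 (le_self_pow₀ hLp1 (by norm_num))
      _ ≤ s16 ^ (32 : ℕ) * t13 ^ (22 : ℕ) := key
      _ ≤ (max s16 t13) ^ (32 : ℕ) * (max s16 t13) ^ (22 : ℕ) :=
          mul_le_mul (pow_le_pow_left₀ (by positivity) (le_max_left _ _) 32)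
            (pow_le_pow_left₀ (by positivity) (le_max_right _ _) 22) (by positivity)
            (by positivity)
      _ = (max s16 t13) ^ (54 : ℕ) := by ring

/-- The final combination step of Theorem 13: if a finite nonempty set `A` of reals
satisfies `|8A| ≥ |A|^{3/2 - 1/64}`, `|8A||8f(A)| ≥ |A|^{3 - 1/128}` and
`|8A - 7A|¹⁶ |5f(A) - 4f(A)|¹¹ ≥ |A|⁴¹` up to a constant and logarithmic factors,
then `|16A|³² |13f(A)|²² ≳ |A|^{81 + 1/3}` and hence
`max(|16A|, |13f(A)|) ≳ |A|^{3/2 + 1/162}`. -/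
theorem stmt19 :
    ∀ c₁ > (0 : ℝ), ∀ p : ℝ, 0 ≤ p → ∃ c₂ > (0 : ℝ), ∃ q : ℝ, 0 ≤ q ∧
      ∀ (A : Finset ℝ) (f : ℝ → ℝ), 2 ≤ A.card → Set.InjOn f (A : Set ℝ) →
      ((foldSum 8 A).card : ℝ) ≥ (A.card : ℝ) ^ ((3 : ℝ) / 2 - 1 / 64) →
      ((foldSum 8 A).card : ℝ) * ((foldSum 8 (A.image f)).card : ℝ) ≥
        (A.card : ℝ) ^ ((3 : ℝ) - 1 / 128) →
      ((foldSum 8 A - foldSum 7 A).card : ℝ) ^ (16 : ℕ) *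
        ((foldSum 5 (A.image f) - foldSum 4 (A.image f)).card : ℝ) ^ (11 : ℕ) ≥
        c₁ * (A.card : ℝ) ^ (41 : ℕ) / (Real.logb 2 (A.card : ℝ)) ^ p →
      (((foldSum 16 A).card : ℝ) ^ (32 : ℕ) * ((foldSum 13 (A.image f)).card : ℝ) ^ (22 : ℕ) ≥
          c₂ * (A.card : ℝ) ^ ((81 : ℝ) + 1 / 3) / (Real.logb 2 (A.card : ℝ)) ^ q ∧
        max ((foldSum 16 A).card : ℝ) ((foldSum 13 (A.image f)).card : ℝ) ≥
          c₂ * (A.card : ℝ) ^ ((3 : ℝ) / 2 + 1 / 162) / (Real.logb 2 (A.card : ℝ)) ^ q) := by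
  intro c₁ hc₁ p hp
  refine ⟨min c₁ (c₁ ^ ((1 : ℝ) / 54)), lt_min hc₁ (Real.rpow_pos_of_pos hc₁ _), p, hp, ?_⟩
  intro A f hA2 hf h1 h2 h3
  have hAne : A.Nonempty := Finset.card_pos.mp (by omega)
  have hBne : (A.image f).Nonempty := hAne.image f
  have hn2 : (2 : ℝ) ≤ (A.card : ℝ) := by exact_mod_cast hA2
  have hn1 : (1 : ℝ) ≤ (A.card : ℝ) := by linarith
  have hL1 : (1 : ℝ) ≤ Real.logb 2 (A.card : ℝ) := by
    rw [show (1 : ℝ) = Real.logb 2 2 from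
      (Real.logb_self_eq_one (by norm_num)).symm]
    exact Real.logb_le_logb_of_le (by norm_num) (by norm_num) hn2
  have hs1 : (1 : ℝ) ≤ ((foldSum 8 A).card : ℝ) :=
    Nat.one_le_cast.mpr (foldSum_nonempty hAne 8).card_pos
  have ht1 : (1 : ℝ) ≤ ((foldSum 8 (A.image f)).card : ℝ) :=
    Nat.one_le_cast.mpr (foldSum_nonempty hBne 8).card_pos
  have hs161 : (1 : ℝ) ≤ ((foldSum 16 A).card : ℝ) :=
    Nat.one_le_cast.mpr (foldSum_nonempty hAne 16).card_pos
  have ht131 : (1 : ℝ) ≤ ((foldSum 13 (A.image f)).card : ℝ) :=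
    Nat.one_le_cast.mpr (foldSum_nonempty hBne 13).card_pos
  have hds : ((foldSum 8 A - foldSum 7 A).card : ℝ) * ((foldSum 8 A).card : ℝ) ≤
      ((foldSum 16 A).card : ℝ) ^ 2 := by
    have h := Finset.ruzsa_triangle_inequality_sub_add_add (foldSum 8 A) (foldSum 8 A)
      (foldSum 7 A)
    rw [show foldSum 8 A + foldSum 8 A = foldSum 16 A from (foldSum_add_eq 8 8 A).symm,
        show foldSum 7 A + foldSum 8 A = foldSum 15 A from (foldSum_add_eq 7 8 A).symm] at h
    have h15 : ((foldSum 15 A).card : ℝ) ≤ ((foldSum 16 A).card : ℝ) :=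
      Nat.cast_le.mpr (card_foldSum_le hAne 15)
    calc ((foldSum 8 A - foldSum 7 A).card : ℝ) * ((foldSum 8 A).card : ℝ)
        ≤ ((foldSum 16 A).card : ℝ) * ((foldSum 15 A).card : ℝ) := by exact_mod_cast h
      _ ≤ ((foldSum 16 A).card : ℝ) * ((foldSum 16 A).card : ℝ) :=
          mul_le_mul_of_nonneg_left h15 (Nat.cast_nonneg _)
      _ = ((foldSum 16 A).card : ℝ) ^ 2 := (sq _).symm
  have het : ((foldSum 5 (A.image f) - foldSum 4 (A.image f)).card : ℝ) *
      ((foldSum 8 (A.image f)).card : ℝ) ≤ ((foldSum 13 (A.image f)).card : ℝ) ^ 2 := by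
    have h := Finset.ruzsa_triangle_inequality_sub_add_add (foldSum 5 (A.image f))
      (foldSum 8 (A.image f)) (foldSum 4 (A.image f))
    rw [show foldSum 5 (A.image f) + foldSum 8 (A.image f) = foldSum 13 (A.image f) from
          (foldSum_add_eq 5 8 (A.image f)).symm,
        show foldSum 4 (A.image f) + foldSum 8 (A.image f) = foldSum 12 (A.image f) from
          (foldSum_add_eq 4 8 (A.image f)).symm] at h
    have h12 : ((foldSum 12 (A.image f)).card : ℝ) ≤ ((foldSum 13 (A.image f)).card : ℝ) :=
      Nat.cast_le.mpr (card_foldSum_le hBne 12)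
    calc ((foldSum 5 (A.image f) - foldSum 4 (A.image f)).card : ℝ) *
          ((foldSum 8 (A.image f)).card : ℝ)
        ≤ ((foldSum 13 (A.image f)).card : ℝ) * ((foldSum 12 (A.image f)).card : ℝ) := by
          exact_mod_cast h
      _ ≤ ((foldSum 13 (A.image f)).card : ℝ) * ((foldSum 13 (A.image f)).card : ℝ) :=
          mul_le_mul_of_nonneg_left h12 (Nat.cast_nonneg _)
      _ = ((foldSum 13 (A.image f)).card : ℝ) ^ 2 := (sq _).symm
  exact realStep c₁ p (A.card : ℝ) (Real.logb 2 (A.card : ℝ)) _ _ _ _ _ _ hc₁ hp hn1 hL1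
    hs1 ht1 hs161 ht131 (Nat.cast_nonneg _) (Nat.cast_nonneg _) h1 h2 h3 hds het
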